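/- Let S*_n be an optimal solution of rLogSpecT with parameter δ_n > 0 (minimizing f(S) = ‖S‖_{1,1} − α·Σ_i log((S·1)_i) over S ∈ S with ‖C_n·S − S·C_n‖_F ≤ δ_n). Then ‖S*_n‖_{1,1} ≤ α·m. -/

import Mathlib

/-- Valid adjacency matrices: symmetric, hollow, nonnegative. -/
def validAdj {m : ℕ} (S : Matrix (Fin m) (Fin m) ℝ) : Prop :=
  S.IsSymm ∧ (∀ i, S i i = 0) ∧ ∀ i j, 0 ≤ S i j

/-- Frobenius norm of a matrix. -/
noncomputable def frob {m : ℕ} (X : Matrix (Fin m) (Fin m) ℝ) : ℝ :=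
  Real.sqrt (∑ i, ∑ j, (X i j) ^ 2)

/-- LogSpecT objective ‖S‖_{1,1} − α·1ᵀ log(S1). -/
noncomputable def obj {m : ℕ} (α : ℝ) (S : Matrix (Fin m) (Fin m) ℝ) : ℝ :=
  (∑ i, ∑ j, |S i j|) - α * ∑ i, Real.log (∑ j, S i j)

/-!
Shrinking an optimal solution `S` to `t • S` with `0 < t < 1` keeps it feasible, lowers the
`ℓ₁` term by `(1 - t) ‖S‖₁,₁` and raises the barrier term by `-α m log t ≤ α m (1 - t) / t`.
Optimality therefore gives `t ‖S‖₁,₁ ≤ α m` for all such `t`; let `t → 1`.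
-/

open Filter Topology

lemma le_of_forall_mul_le_of_lt_one {a b : ℝ} (h : ∀ t ∈ Set.Ioo (0 : ℝ) 1, t * a ≤ b) :
    a ≤ b := by
  have hlim : Tendsto (fun t : ℝ => t * a) (𝓝[<] 1) (𝓝 a) := by
    simpa using ((continuous_id.mul_const a).tendsto (1 : ℝ)).mono_left nhdsWithin_le_nhds
  exact le_of_tendsto hlim (eventually_of_mem (Ioo_mem_nhdsLT zero_lt_one) h)

lemma le_of_forall_one_sub_mul_le_neg_mul_log {a c : ℝ} (hc : 0 ≤ c)
    (h : ∀ t ∈ Set.Ioo (0 : ℝ) 1, (1 - t) * a ≤ -(c * Real.log t)) : a ≤ c := by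
  refine le_of_forall_mul_le_of_lt_one fun t ht => ?_
  obtain ⟨ht0, ht1⟩ := ht
  have hlog : -Real.log t ≤ (1 - t) / t := by
    have := Real.one_sub_inv_le_log_of_pos ht0
    rw [sub_div, div_self ht0.ne', one_div]
    linarith
  have : (1 - t) * a ≤ (1 - t) * (c / t) := by
    calc (1 - t) * a ≤ c * -Real.log t := by linarith [h t ⟨ht0, ht1⟩]
      _ ≤ c * ((1 - t) / t) := mul_le_mul_of_nonneg_left hlog hc
      _ = (1 - t) * (c / t) := by ring
  have := le_of_mul_le_mul_left this (by linarith)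
  rwa [le_div_iff₀ ht0, mul_comm] at this

variable {m : ℕ}

lemma validAdj.smul {S : Matrix (Fin m) (Fin m) ℝ} (hS : validAdj S) {t : ℝ} (ht : 0 ≤ t) :
    validAdj (t • S) := by
  obtain ⟨hsymm, hdiag, hnonneg⟩ := hS
  exact ⟨hsymm.smul t, fun i => by simp [hdiag i], fun i j => mul_nonneg ht (hnonneg i j)⟩

lemma frob_smul (X : Matrix (Fin m) (Fin m) ℝ) {t : ℝ} (ht : 0 ≤ t) :
    frob (t • X) = t * frob X := by
  simp only [frob, Matrix.smul_apply, smul_eq_mul, mul_pow, ← Finset.mul_sum]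
  rw [Real.sqrt_mul (sq_nonneg t), Real.sqrt_sq ht]

lemma frob_commutator_smul (C S : Matrix (Fin m) (Fin m) ℝ) {t : ℝ} (ht : 0 ≤ t) :
    frob (C * (t • S) - (t • S) * C) = t * frob (C * S - S * C) := by
  rw [Matrix.mul_smul, Matrix.smul_mul, ← smul_sub, frob_smul _ ht]

lemma obj_smul (α : ℝ) {S : Matrix (Fin m) (Fin m) ℝ} (hpos : ∀ i, 0 < ∑ j, S i j)
    {t : ℝ} (ht : 0 < t) :
    obj α (t • S) = obj α S - (1 - t) * (∑ i, ∑ j, |S i j|) - α * (m * Real.log t) := by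
  have hrow (i : Fin m) : Real.log (∑ j, (t • S) i j) = Real.log t + Real.log (∑ j, S i j) := by
    simp only [Matrix.smul_apply, smul_eq_mul, ← Finset.mul_sum]
    exact Real.log_mul ht.ne' (hpos i).ne'
  have habs : ∑ i, ∑ j, |(t • S) i j| = t * ∑ i, ∑ j, |S i j| := by
    simp only [Matrix.smul_apply, smul_eq_mul, abs_mul, abs_of_pos ht, Finset.mul_sum]
  simp only [obj, habs, hrow, Finset.sum_add_distrib, Finset.sum_const, Finset.card_univ,
    Fintype.card_fin, nsmul_eq_mul]
  ring

theorem stmt_14_general (m : ℕ) (α δn : ℝ) (hα : 0 < α)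
    (Cn : Matrix (Fin m) (Fin m) ℝ)
    (Sn : Matrix (Fin m) (Fin m) ℝ)
    (hfeas : validAdj Sn ∧ frob (Cn * Sn - Sn * Cn) ≤ δn)
    (hpos : ∀ i, 0 < ∑ j, Sn i j)
    (hopt : ∀ T, validAdj T → frob (Cn * T - T * Cn) ≤ δn →
      (∀ i, 0 < ∑ j, T i j) → obj α Sn ≤ obj α T) :
    (∑ i, ∑ j, |Sn i j|) ≤ α * m := by
  obtain ⟨hvalid, hfrob⟩ := hfeas
  refine le_of_forall_one_sub_mul_le_neg_mul_log (by positivity) fun t ⟨ht0, ht1⟩ => ?_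
  have hfrob_t : frob (Cn * (t • Sn) - (t • Sn) * Cn) ≤ δn := by
    rw [frob_commutator_smul Cn Sn ht0.le]
    exact (mul_le_of_le_one_left (Real.sqrt_nonneg _) ht1.le).trans hfrob
  have hpos_t (i : Fin m) : 0 < ∑ j, (t • Sn) i j := by
    simpa [Matrix.smul_apply, ← Finset.mul_sum] using mul_pos ht0 (hpos i)
  have hle := hopt (t • Sn) (hvalid.smul ht0.le) hfrob_t hpos_t
  rw [obj_smul α hpos ht0] at hle
  linarith

/-- Any optimal solution S*_n of rLogSpecT with parameter δ_n > 0 satisfies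
‖S*_n‖_{1,1} ≤ α·m. -/
theorem stmt_14 (m : ℕ) (α δn : ℝ) (hα : 0 < α) (hδn : 0 < δn)
    (Cn : Matrix (Fin m) (Fin m) ℝ) (hCn : Cn.IsSymm)
    (Sn : Matrix (Fin m) (Fin m) ℝ)
    (hfeas : validAdj Sn ∧ frob (Cn * Sn - Sn * Cn) ≤ δn)
    (hpos : ∀ i, 0 < ∑ j, Sn i j)
    (hopt : ∀ T, validAdj T → frob (Cn * T - T * Cn) ≤ δn →
      (∀ i, 0 < ∑ j, T i j) → obj α Sn ≤ obj α T) :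
    (∑ i, ∑ j, |Sn i j|) ≤ α * m :=
  stmt_14_general m α δn hα Cn Sn hfeas hpos hopt
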